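/- arXiv:2107.13160 — 3 statements merged into one kernel-verified Lean document; each statement's English description precedes it below -/
import Mathlib

section
/- For any real numbers p ≥ 1 and q ≥ 1 there exists a positive constant M (independent of p and q) such that Γ(pq + 1)^(1/q) ≤ M · Γ(p+1) · q^p, where Γ is the Gamma function. -/
open Real Nat

lemma my_stirling_pos (n : ℕ) (hn : 1 ≤ n) : 0 < Stirling.stirlingSeq n := by
  obtain ⟨m, rfl⟩ : ∃ m, n = m + 1 := ⟨n - 1, by omega⟩
  exact Stirling.stirlingSeq'_pos m

lemma my_stirling_ge (n : ℕ) (hn : 1 ≤ n) : Real.sqrt π ≤ Stirling.stirlingSeq n := by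
  obtain ⟨m, rfl⟩ : ∃ m, n = m + 1 := ⟨n - 1, by omega⟩
  have h : Filter.Tendsto (Stirling.stirlingSeq ∘ Nat.succ) Filter.atTop (nhds (Real.sqrt π)) :=
    Stirling.tendsto_stirlingSeq_sqrt_pi.comp (Filter.tendsto_add_atTop_nat 1)
  exact Stirling.stirlingSeq'_antitone.le_of_tendsto h m

lemma my_stirling_le (n : ℕ) (hn : 1 ≤ n) : Stirling.stirlingSeq n ≤ Real.exp 1 / Real.sqrt 2 := by
  obtain ⟨m, rfl⟩ : ∃ m, n = m + 1 := ⟨n - 1, by omega⟩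
  have := Stirling.stirlingSeq'_antitone (Nat.zero_le m)
  simpa using this

lemma my_log_factorial (n : ℕ) (hn : 1 ≤ n) :
    Real.log (n !) = Real.log (Stirling.stirlingSeq n)
      + (Real.log 2 / 2 + Real.log n / 2) + ((n : ℝ) * Real.log n - n) := by
  have hn' : (0:ℝ) < n := by exact_mod_cast hn
  have hd : (0:ℝ) < Real.sqrt (2 * n) * ((n : ℝ) / Real.exp 1) ^ n := by positivity
  have hfac : (n ! : ℝ) = Stirling.stirlingSeq n * (Real.sqrt (2 * n) * ((n:ℝ) / Real.exp 1) ^ n) := by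
    rw [Stirling.stirlingSeq]; field_simp
  have h1 : Real.log (Stirling.stirlingSeq n) ≠ 0 ∨ True := Or.inr trivial
  rw [hfac, Real.log_mul (ne_of_gt (my_stirling_pos n hn)) (ne_of_gt hd),
    Real.log_mul (by positivity) (by positivity), Real.log_sqrt (by positivity),
    Real.log_mul (by norm_num) (ne_of_gt hn'), Real.log_pow, Real.log_div (ne_of_gt hn') (Real.exp_ne_zero 1),
    Real.log_exp]
  ring

lemma my_fact_upper (n : ℕ) (hn : 1 ≤ n) :
    Real.log (n !) ≤ 1 + Real.log n / 2 + ((n : ℝ) * Real.log n - n) := by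
  have h := my_log_factorial n hn
  have h2 : Real.log (Stirling.stirlingSeq n) ≤ 1 - Real.log 2 / 2 := by
    have := my_stirling_le n hn
    have hle : Real.log (Stirling.stirlingSeq n) ≤ Real.log (Real.exp 1 / Real.sqrt 2) :=
      Real.log_le_log (my_stirling_pos n hn) this
    rw [Real.log_div (Real.exp_ne_zero 1) (by positivity), Real.log_exp,
      Real.log_sqrt (by norm_num)] at hle
    linarith
  linarith [h]

lemma my_fact_lower (n : ℕ) (hn : 1 ≤ n) :
    Real.log n / 2 + ((n : ℝ) * Real.log n - n) ≤ Real.log (n !) := by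
  have h := my_log_factorial n hn
  have h2 : (0:ℝ) ≤ Real.log (Stirling.stirlingSeq n) := by
    have hπ : (1:ℝ) ≤ Real.sqrt π := by
      rw [show (1:ℝ) = Real.sqrt 1 by simp]
      exact Real.sqrt_le_sqrt (by linarith [Real.pi_gt_three])
    exact Real.log_nonneg (le_trans hπ (my_stirling_ge n hn))
  have h3 : (0:ℝ) ≤ Real.log 2 := Real.log_nonneg (by norm_num)
  linarith

lemma my_interp_upper (n : ℕ) (hn : 1 ≤ n) (x : ℝ) (h1 : (n:ℝ) ≤ x) (h2 : x ≤ n + 1) :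
    Real.log (Real.Gamma (x + 1)) ≤ Real.log (n !) + (x - n) * Real.log (n + 1) := by
  have hn' : (0:ℝ) < n := by exact_mod_cast hn
  set t : ℝ := x - n with ht
  have ht0 : 0 ≤ t := by linarith
  have ht1 : t ≤ 1 := by linarith
  have hconv := Real.convexOn_log_Gamma.2 (Set.mem_Ioi.2 (by positivity : (0:ℝ) < (n:ℝ) + 1))
    (Set.mem_Ioi.2 (by positivity : (0:ℝ) < (n:ℝ) + 2)) (by linarith : (0:ℝ) ≤ 1 - t) ht0
    (by ring)
  have hcomb : (1 - t) • ((n:ℝ) + 1) + t • ((n:ℝ) + 2) = x + 1 := by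
    simp only [smul_eq_mul]; ring
  rw [hcomb] at hconv
  simp only [Function.comp_apply, smul_eq_mul] at hconv
  have hg1 : Real.Gamma ((n:ℝ) + 1) = n ! := Real.Gamma_nat_eq_factorial n
  have hg2 : Real.Gamma ((n:ℝ) + 2) = (n + 1)! := by
    have := Real.Gamma_nat_eq_factorial (n + 1)
    rw [show ((n:ℝ) + 2) = ((n + 1 : ℕ) : ℝ) + 1 by push_cast; ring, this]
  have hfs : Real.log ((n + 1)! : ℝ) = Real.log (n + 1) + Real.log (n !) := by
    rw [Nat.factorial_succ, Nat.cast_mul, Real.log_mul (by positivity)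
      (by exact_mod_cast (Nat.factorial_pos n).ne'), Nat.cast_add, Nat.cast_one]
  rw [hg1, hg2, hfs] at hconv
  calc Real.log (Real.Gamma (x + 1)) ≤ (1 - t) * Real.log (n !)
        + t * (Real.log ((n:ℝ) + 1) + Real.log (n !)) := hconv
    _ = Real.log (n !) + (x - n) * Real.log ((n:ℝ) + 1) := by rw [← ht]; ring

lemma my_interp_lower (n : ℕ) (hn : 1 ≤ n) (x : ℝ) (h1 : (n:ℝ) ≤ x) (h2 : x ≤ n + 1) :
    Real.log (n !) + (x - n) * Real.log n ≤ Real.log (Real.Gamma (x + 1)) := by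
  have hn' : (0:ℝ) < n := by exact_mod_cast hn
  set t : ℝ := x - n with ht
  have ht0 : 0 ≤ t := by linarith
  have ht1 : t ≤ 1 := by linarith
  have hconv := Real.convexOn_log_Gamma.2 (Set.mem_Ioi.2 hn')
    (Set.mem_Ioi.2 (by linarith : (0:ℝ) < x + 1))
    (by positivity : (0:ℝ) ≤ t / (1 + t))
    (by positivity : (0:ℝ) ≤ 1 / (1 + t))
    (by field_simp; ring)
  have hcomb : (t / (1 + t)) • (n:ℝ) + (1 / (1 + t)) • (x + 1) = (n:ℝ) + 1 := by
    have h1t : (0:ℝ) < 1 + t := by linarith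
    simp only [smul_eq_mul]
    field_simp
    ring
  rw [hcomb] at hconv
  simp only [Function.comp_apply, smul_eq_mul] at hconv
  -- Gamma values
  have hgn : Real.Gamma ((n:ℝ)) = (n - 1)! := by
    obtain ⟨m, rfl⟩ : ∃ m, n = m + 1 := ⟨n - 1, by omega⟩
    have := Real.Gamma_nat_eq_factorial m
    rw [show ((m + 1 : ℕ) : ℝ) = (m:ℝ) + 1 by push_cast; ring, this]
    simp
  have hg1 : Real.Gamma ((n:ℝ) + 1) = n ! := Real.Gamma_nat_eq_factorial n
  rw [hgn, hg1] at hconv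
  have hfs : Real.log (n ! : ℝ) = Real.log n + Real.log ((n - 1)! : ℝ) := by
    obtain ⟨m, rfl⟩ : ∃ m, n = m + 1 := ⟨n - 1, by omega⟩
    rw [Nat.factorial_succ, Nat.cast_mul, Real.log_mul (by exact_mod_cast (by omega : 0 < m + 1).ne')
      (by exact_mod_cast (Nat.factorial_pos m).ne')]
    simp
  have h1t : (0:ℝ) < 1 + t := by linarith
  -- from hconv: log n! ≤ (t/(1+t)) log (n-1)! + (1/(1+t)) log Γ(x+1)
  have key : (1 + t) * Real.log (n !) ≤ t * Real.log ((n-1)! : ℝ) + Real.log (Real.Gamma (x + 1)) := by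
    have := mul_le_mul_of_nonneg_left hconv (le_of_lt h1t)
    calc (1 + t) * Real.log (n !) = (1 + t) * Real.log (n !) := rfl
      _ ≤ (1 + t) * (t / (1 + t) * Real.log ((n-1)! : ℝ) + 1 / (1 + t) * Real.log (Real.Gamma (x + 1))) := this
      _ = t * Real.log ((n-1)! : ℝ) + Real.log (Real.Gamma (x + 1)) := by field_simp
  nlinarith [key, hfs]

theorem gamma_key_estimate :
    ∃ M : ℝ, 0 < M ∧ ∀ p q : ℝ, 1 ≤ p → 1 ≤ q →
      (Real.Gamma (p * q + 1)) ^ (1 / q) ≤ M * Real.Gamma (p + 1) * q ^ p := by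
  refine ⟨Real.exp 7, Real.exp_pos 7, fun p q hp hq => ?_⟩
  have hp0 : (0:ℝ) < p := by linarith
  have hq0 : (0:ℝ) < q := by linarith
  have hu1 : (1:ℝ) ≤ p * q := by nlinarith
  have hu0 : (0:ℝ) < p * q := by linarith
  have hG1 : 0 < Real.Gamma (p * q + 1) := Real.Gamma_pos_of_pos (by linarith)
  have hG2 : 0 < Real.Gamma (p + 1) := Real.Gamma_pos_of_pos (by linarith)
  have main : (1/q) * Real.log (Real.Gamma (p * q + 1))
      ≤ 7 + Real.log (Real.Gamma (p + 1)) + p * Real.log q := by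
    set u := p * q with hu
    set k := Nat.floor u with hk
    set m := Nat.floor p with hm
    have hk1 : 1 ≤ k := Nat.le_floor (by exact_mod_cast hu1)
    have hK0 : (1:ℝ) ≤ (k:ℝ) := by exact_mod_cast hk1
    have hkle : (k:ℝ) ≤ u := Nat.floor_le hu0.le
    have hklt : u < (k:ℝ) + 1 := Nat.lt_floor_add_one u
    have hm1 : 1 ≤ m := Nat.le_floor (by exact_mod_cast hp)
    have hM0 : (1:ℝ) ≤ (m:ℝ) := by exact_mod_cast hm1
    have hmle : (m:ℝ) ≤ p := Nat.floor_le hp0.le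
    have hmlt : p < (m:ℝ) + 1 := Nat.lt_floor_add_one p
    have hlp : 0 ≤ Real.log p := Real.log_nonneg hp
    have hlq : 0 ≤ Real.log q := Real.log_nonneg hq
    have hlu : Real.log u = Real.log p + Real.log q := Real.log_mul hp0.ne' hq0.ne'
    have hlu0 : 0 ≤ Real.log u := Real.log_nonneg hu1
    have hl2 : Real.log 2 ≤ 1 := by
      linarith [Real.log_le_sub_one_of_pos (by norm_num : (0:ℝ) < 2)]
    -- upper bound
    have U1 := my_interp_upper k hk1 u hkle hklt.le
    have U2 := my_fact_upper k hk1
    have hlogk : Real.log k ≤ Real.log u := by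
      apply Real.log_le_log (by linarith) hkle
    have hlogk1 : Real.log ((k:ℝ) + 1) ≤ Real.log u + 1 := by
      have h2u : (k:ℝ) + 1 ≤ 2 * u := by linarith
      have h3 : Real.log ((k:ℝ) + 1) ≤ Real.log (2 * u) := Real.log_le_log (by linarith) h2u
      rw [Real.log_mul (by norm_num) hu0.ne'] at h3
      linarith
    have hδ0 : 0 ≤ u - (k:ℝ) := by linarith
    have hδ1 : u - (k:ℝ) ≤ 1 := by linarith
    have t1 : (k:ℝ) * Real.log k ≤ (k:ℝ) * Real.log u :=
      mul_le_mul_of_nonneg_left hlogk (by linarith)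
    have t2 : (u - (k:ℝ)) * Real.log ((k:ℝ) + 1) ≤ (u - (k:ℝ)) * (Real.log u + 1) :=
      mul_le_mul_of_nonneg_left hlogk1 hδ0
    have t3 : (u - (k:ℝ)) * (Real.log u + 1) ≤ (u - (k:ℝ)) * Real.log u + 1 := by nlinarith
    have t4 : (k:ℝ) * Real.log u + (u - (k:ℝ)) * Real.log u = u * Real.log u := by ring
    have UP : Real.log (Real.Gamma (u + 1)) ≤ 3 + Real.log u / 2 + (u * Real.log u - u) := by
      linarith [U1, U2]
    -- lower bound
    have L1 := my_interp_lower m hm1 p hmle hmlt.le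
    have L2 := my_fact_lower m hm1
    have hm0 : (0:ℝ) < (m:ℝ) := by linarith
    have hp2m : p ≤ 2 * (m:ℝ) := by linarith
    have hlogm : Real.log p ≤ Real.log m + 1 := by
      have h3 : Real.log p ≤ Real.log (2 * (m:ℝ)) := Real.log_le_log hp0 hp2m
      rw [Real.log_mul (by norm_num) hm0.ne'] at h3
      linarith
    have hplogm : p * Real.log p - 2 ≤ p * Real.log m := by
      have e1 : Real.log p - Real.log m ≤ p / (m:ℝ) - 1 := by
        have h4 := Real.log_le_sub_one_of_pos (show (0:ℝ) < p / m by positivity)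
        rwa [Real.log_div hp0.ne' hm0.ne'] at h4
      have e2 : p * (Real.log p - Real.log m) ≤ p * (p / m - 1) :=
        mul_le_mul_of_nonneg_left e1 hp0.le
      have id1 : p * (p / (m:ℝ) - 1) = (p / (m:ℝ)) * (p - (m:ℝ)) := by
        field_simp
      have hpm2 : p / (m:ℝ) ≤ 2 := by rw [div_le_iff₀ hm0]; linarith
      have hθ1 : p - (m:ℝ) ≤ 1 := by linarith
      have e3 : (p / (m:ℝ)) * (p - (m:ℝ)) ≤ 2 * 1 :=
        mul_le_mul hpm2 hθ1 (by linarith) (by norm_num)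
      linarith [e2, e3, id1]
    have t5 : (m:ℝ) * Real.log m + (p - (m:ℝ)) * Real.log m = p * Real.log m := by ring
    have LO : Real.log p / 2 - 1/2 + p * Real.log p - 2 - p ≤ Real.log (Real.Gamma (p + 1)) := by
      linarith [L1, L2]
    -- combine
    have hdiv : (1/q) * Real.log (Real.Gamma (u + 1))
        ≤ (1/q) * (3 + Real.log u / 2 + (u * Real.log u - u)) :=
      mul_le_mul_of_nonneg_left UP (by positivity)
    have hexp : (1/q) * (3 + Real.log u / 2 + (u * Real.log u - u))
        = 3/q + Real.log p/(2*q) + Real.log q/(2*q) + p * Real.log p + p * Real.log q - p := by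
      rw [hlu, hu]; field_simp; ring
    have b1 : 3/q ≤ 3 := div_le_self (by norm_num) hq
    have b2 : Real.log p/(2*q) ≤ Real.log p / 2 := by
      apply div_le_div_of_nonneg_left hlp (by norm_num) (by linarith)
    have b3 : Real.log q/(2*q) ≤ 1/2 := by
      have h1 : Real.log q ≤ q := by linarith [Real.log_le_sub_one_of_pos hq0]
      rw [div_le_iff₀ (by positivity)]
      linarith
    linarith [hdiv, LO, b1, b2, b3, hexp]
  have hL : (0:ℝ) < Real.Gamma (p * q + 1) ^ (1/q) := Real.rpow_pos_of_pos hG1 _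
  have hR : (0:ℝ) < Real.exp 7 * Real.Gamma (p + 1) * q ^ p := by positivity
  rw [← Real.exp_log hL, ← Real.exp_log hR]
  apply Real.exp_le_exp.2
  rw [Real.log_rpow hG1, Real.log_mul (by positivity) (by positivity),
    Real.log_mul (Real.exp_ne_zero 7) (ne_of_gt hG2), Real.log_exp, Real.log_rpow hq0]
  linarith [main]
end

section
/- Let α ∈ (0,1), ζ ∈ (0,1), and m, n > 0. If u : (0,T] → ℝ is bounded, nonnegative, and satisfies u(t) ≤ m + n ∫_0^t (t-τ)^(ζ-1) u(τ) dτ for all t ∈ (0,T], then u(t) ≤ m · E_{ζ,1}(n Γ(ζ) t^ζ) for all t ∈ (0,T], where E_{ζ,1}(z) = Σ_{k≥0} z^k / Γ(ζk + 1) is the Mittag-Leffler function. -/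
open MeasureTheory

/-- The one-parameter Mittag-Leffler function `E_{ζ,1}(z) = Σ_{k≥0} z^k / Γ(ζ k + 1)`. -/
noncomputable def mittagLeffler (ζ z : ℝ) : ℝ :=
  ∑' k : ℕ, z ^ k / Real.Gamma (ζ * k + 1)

/-! Iterating the integral inequality `k` times bounds `u t` by `m` times the `k`-th partial sum
of the Mittag-Leffler series of `n Γ(ζ) t^ζ` plus `C` times its `k`-th term, where `C` bounds `u`:
each iteration is a Beta integral,
`∫₀ᵗ (t - τ)^(ζ-1) τ^(ζj) dτ = Γ(ζ) Γ(ζj + 1) / Γ(ζ(j + 1) + 1) · t^(ζ(j+1))`.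
The series converges because `Γ(ζ(k + p) + 1) ≥ (ζk + 1) Γ(ζk + 1)` once `ζp ≥ 1`, so its terms
eventually halve every `p` steps; letting `k → ∞` gives the bound. -/

open Real Filter Topology Finset

-- `f` need not be integrable: if it is not, its integral is `0`.
theorem intervalIntegral.integral_mono_of_nonneg {f g : ℝ → ℝ} {a b : ℝ} (hab : a ≤ b)
    (hg : IntervalIntegrable g volume a b) (hf : ∀ x ∈ Set.Ioc a b, 0 ≤ f x)
    (hfg : ∀ x ∈ Set.Ioc a b, f x ≤ g x) :
    ∫ x in a..b, f x ≤ ∫ x in a..b, g x := by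
  rw [intervalIntegral.integral_of_le hab, intervalIntegral.integral_of_le hab]
  exact MeasureTheory.integral_mono_of_nonneg ((ae_restrict_iff' measurableSet_Ioc).2 (.of_forall hf)) hg.1
    ((ae_restrict_iff' measurableSet_Ioc).2 (.of_forall hfg))

theorem integral_sub_rpow_mul_rpow {a b t : ℝ} (ha : 0 < a) (hb : 0 < b) (ht : 0 < t) :
    ∫ τ in 0..t, (t - τ) ^ (a - 1) * τ ^ (b - 1) =
      Gamma a * Gamma b / Gamma (a + b) * t ^ (a + b - 1) := by
  have hcast : ∀ τ ∈ Set.uIcc 0 t, (((t - τ) ^ (a - 1) * τ ^ (b - 1) : ℝ) : ℂ) =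
      (τ : ℂ) ^ ((b : ℂ) - 1) * ((t : ℂ) - τ) ^ ((a : ℂ) - 1) := by
    intro τ hτ
    rw [Set.uIcc_of_le ht.le] at hτ
    push_cast [Complex.ofReal_cpow (sub_nonneg.2 hτ.2), Complex.ofReal_cpow hτ.1]
    ring
  apply Complex.ofReal_injective
  rw [← intervalIntegral.integral_ofReal, intervalIntegral.integral_congr hcast,
    Complex.betaIntegral_scaled _ _ ht,
    Complex.betaIntegral_eq_Gamma_mul_div _ _ (by simpa) (by simpa)]
  push_cast [Complex.ofReal_cpow ht.le, ← Complex.Gamma_ofReal]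
  ring_nf

theorem intervalIntegrable_sub_rpow_mul_rpow {a b t : ℝ} (ha : 0 < a) (hb : 0 < b)
    (ht : 0 < t) :
    IntervalIntegrable (fun τ => (t - τ) ^ (a - 1) * τ ^ (b - 1)) volume 0 t := by
  -- a non-integrable function has integral `0`, and this one's is positive
  refine intervalIntegral.intervalIntegrable_of_integral_ne_zero ?_
  rw [integral_sub_rpow_mul_rpow ha hb ht]
  have := Gamma_pos_of_pos ha
  have := Gamma_pos_of_pos hb
  have := Gamma_pos_of_pos (add_pos ha hb)
  positivity

theorem summable_of_nonneg_of_add_le_mul {f : ℕ → ℝ} {p K : ℕ} {r : ℝ} (hf : ∀ k, 0 ≤ f k)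
    (hr₀ : 0 ≤ r) (hr₁ : r < 1) (hdecay : ∀ k ≥ K, f (k + p) ≤ r * f k) : Summable f := by
  rw [← summable_nat_add_iff K]
  set g := fun k => f (k + K)
  refine summable_of_sum_range_le (c := (∑ k ∈ range p, g k) / (1 - r)) (fun k => hf _)
    fun N => ?_
  have hmono : ∑ k ∈ range N, g k ≤ ∑ k ∈ range (p + N), g k :=
    sum_le_sum_of_subset_of_nonneg (range_mono (by omega)) fun k _ _ => hf _
  have hshift : ∑ k ∈ range N, g (p + k) ≤ r * ∑ k ∈ range (p + N), g k :=
    calc ∑ k ∈ range N, g (p + k) ≤ ∑ k ∈ range N, r * g k :=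
          sum_le_sum fun k _ => by
            simpa only [g, add_comm p, add_right_comm] using hdecay (k + K) (by omega)
      _ ≤ r * ∑ k ∈ range (p + N), g k := by rw [← mul_sum]; gcongr
  have hsplit := sum_range_add g p N
  rw [le_div_iff₀ (by linarith)]
  nlinarith

theorem Real.mul_Gamma_le_Gamma {x y : ℝ} (hx : 1 ≤ x) (hxy : x + 1 ≤ y) :
    x * Gamma x ≤ Gamma y := by
  rw [← Gamma_add_one (by linarith)]
  exact Gamma_strictMonoOn_Ici.monotoneOn (by simp; linarith) (by simp; linarith) hxy

theorem summable_mittagLeffler {ζ : ℝ} (hζ : 0 < ζ) (y : ℝ) :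
    Summable fun k : ℕ => y ^ k / Gamma (ζ * k + 1) := by
  have hΓ : ∀ k : ℕ, 0 < Gamma (ζ * k + 1) := fun k => Gamma_pos_of_pos (by positivity)
  refine Summable.of_norm_bounded (g := fun k : ℕ => |y| ^ k / Gamma (ζ * k + 1)) ?_
    fun k => by rw [norm_div, norm_pow, Real.norm_eq_abs, Real.norm_of_nonneg (hΓ k).le]
  obtain ⟨p, hp⟩ := exists_nat_ge (1 / ζ)
  obtain ⟨K, hK⟩ := exists_nat_ge (2 * |y| ^ p / ζ)
  rw [div_le_iff₀ hζ] at hp hK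
  refine summable_of_nonneg_of_add_le_mul (p := p) (K := K) (r := 1 / 2)
    (fun k => by have := hΓ k; positivity) (by norm_num) (by norm_num) fun k hk => ?_
  have hk' : 2 * |y| ^ p ≤ ζ * k + 1 := by
    have : (K : ℝ) ≤ k := by exact_mod_cast hk
    nlinarith
  have hΓle : (ζ * k + 1) * Gamma (ζ * k + 1) ≤ Gamma (ζ * ↑(k + p) + 1) :=
    mul_Gamma_le_Gamma (by nlinarith [(k.cast_nonneg : (0 : ℝ) ≤ k)]) (by push_cast; nlinarith)
  calc |y| ^ (k + p) / Gamma (ζ * ↑(k + p) + 1)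
      ≤ |y| ^ (k + p) / ((ζ * k + 1) * Gamma (ζ * k + 1)) :=
        div_le_div_of_nonneg_left (by positivity) (by have := hΓ k; positivity) hΓle
    _ = |y| ^ p / (ζ * k + 1) * (|y| ^ k / Gamma (ζ * k + 1)) := by
        rw [pow_add]; field_simp
    _ ≤ 1 / 2 * (|y| ^ k / Gamma (ζ * k + 1)) := by
        refine mul_le_mul_of_nonneg_right ?_ (by have := hΓ k; positivity)
        rw [div_le_iff₀ (by positivity)]
        linarith

noncomputable def mittagLefflerTerm (ζ c : ℝ) (k : ℕ) (t : ℝ) : ℝ :=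
  (c * Gamma ζ) ^ k * t ^ (ζ * k) / Gamma (ζ * k + 1)

noncomputable def gronwallMajorant (ζ c m C : ℝ) (k : ℕ) (t : ℝ) : ℝ :=
  m * ∑ j ∈ range k, mittagLefflerTerm ζ c j t + C * mittagLefflerTerm ζ c k t

section MittagLefflerTerm

variable {ζ c t : ℝ}

@[simp]
theorem mittagLefflerTerm_zero : mittagLefflerTerm ζ c 0 t = 1 := by
  simp [mittagLefflerTerm]

theorem mittagLefflerTerm_eq (k : ℕ) (ht : 0 ≤ t) :
    mittagLefflerTerm ζ c k t = (c * Gamma ζ * t ^ ζ) ^ k / Gamma (ζ * k + 1) := by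
  rw [mittagLefflerTerm, mul_pow _ (t ^ ζ), rpow_mul_natCast ht]

theorem kernel_mul_mittagLefflerTerm (k : ℕ) (τ : ℝ) :
    (t - τ) ^ (ζ - 1) * mittagLefflerTerm ζ c k τ =
      (c * Gamma ζ) ^ k / Gamma (ζ * k + 1) * ((t - τ) ^ (ζ - 1) * τ ^ ((ζ * k + 1) - 1)) := by
  rw [add_sub_cancel_right, mittagLefflerTerm]
  ring

theorem intervalIntegrable_kernel_mul_mittagLefflerTerm (hζ : 0 < ζ) (ht : 0 < t) (k : ℕ) :
    IntervalIntegrable (fun τ => (t - τ) ^ (ζ - 1) * mittagLefflerTerm ζ c k τ) volume 0 t := by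
  simp_rw [kernel_mul_mittagLefflerTerm]
  exact (intervalIntegrable_sub_rpow_mul_rpow hζ (by positivity) ht).const_mul _

theorem mul_integral_kernel_mul_mittagLefflerTerm (hζ : 0 < ζ) (ht : 0 < t) (k : ℕ) :
    c * ∫ τ in 0..t, (t - τ) ^ (ζ - 1) * mittagLefflerTerm ζ c k τ =
      mittagLefflerTerm ζ c (k + 1) t := by
  simp_rw [kernel_mul_mittagLefflerTerm]
  rw [intervalIntegral.integral_const_mul,
    integral_sub_rpow_mul_rpow hζ (by positivity) ht, mittagLefflerTerm,
    show ζ + (ζ * k + 1) = ζ * ↑(k + 1) + 1 by push_cast; ring,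
    show ζ * ↑(k + 1) + 1 - 1 = ζ * ↑(k + 1) by ring]
  have := (Gamma_pos_of_pos (show 0 < ζ * k + 1 by positivity)).ne'
  field_simp
  ring

end MittagLefflerTerm

section GronwallMajorant

variable {ζ c m C t : ℝ}

theorem kernel_mul_gronwallMajorant (k : ℕ) (τ : ℝ) :
    (t - τ) ^ (ζ - 1) * gronwallMajorant ζ c m C k τ =
      m * ∑ j ∈ range k, (t - τ) ^ (ζ - 1) * mittagLefflerTerm ζ c j τ +
        C * ((t - τ) ^ (ζ - 1) * mittagLefflerTerm ζ c k τ) := by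
  rw [gronwallMajorant, mul_add, mul_left_comm _ m, mul_left_comm _ C,
    mul_sum (range k) (fun j => mittagLefflerTerm ζ c j τ)]

theorem intervalIntegrable_kernel_mul_sum_mittagLefflerTerm (hζ : 0 < ζ) (ht : 0 < t) (k : ℕ) :
    IntervalIntegrable (fun τ => ∑ j ∈ range k, (t - τ) ^ (ζ - 1) * mittagLefflerTerm ζ c j τ)
      volume 0 t := by
  have := IntervalIntegrable.sum (range k) fun j _ =>
    intervalIntegrable_kernel_mul_mittagLefflerTerm (c := c) hζ ht j
  rwa [sum_fn] at this

theorem intervalIntegrable_kernel_mul_gronwallMajorant (hζ : 0 < ζ) (ht : 0 < t) (k : ℕ) :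
    IntervalIntegrable (fun τ => (t - τ) ^ (ζ - 1) * gronwallMajorant ζ c m C k τ) volume 0 t := by
  simp_rw [kernel_mul_gronwallMajorant]
  exact ((intervalIntegrable_kernel_mul_sum_mittagLefflerTerm hζ ht k).const_mul m).add
    ((intervalIntegrable_kernel_mul_mittagLefflerTerm hζ ht k).const_mul C)

theorem add_mul_integral_kernel_mul_gronwallMajorant (hζ : 0 < ζ) (ht : 0 < t) (k : ℕ) :
    m + c * ∫ τ in 0..t, (t - τ) ^ (ζ - 1) * gronwallMajorant ζ c m C k τ =
      gronwallMajorant ζ c m C (k + 1) t := by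
  have hI := intervalIntegrable_kernel_mul_mittagLefflerTerm (c := c) hζ ht
  simp_rw [kernel_mul_gronwallMajorant]
  rw [intervalIntegral.integral_add
      ((intervalIntegrable_kernel_mul_sum_mittagLefflerTerm hζ ht k).const_mul m)
      ((hI k).const_mul C), intervalIntegral.integral_const_mul,
    intervalIntegral.integral_const_mul, intervalIntegral.integral_finsetSum fun j _ => hI j,
    gronwallMajorant, sum_range_succ', mittagLefflerTerm_zero]
  simp only [← mul_integral_kernel_mul_mittagLefflerTerm (c := c) hζ ht, ← mul_sum]
  ring

theorem tendsto_gronwallMajorant (hζ : 0 < ζ) (ht : 0 ≤ t) :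
    Tendsto (fun k => gronwallMajorant ζ c m C k t) atTop
      (𝓝 (m * mittagLeffler ζ (c * Gamma ζ * t ^ ζ))) := by
  have hsum := summable_mittagLeffler hζ (c * Gamma ζ * t ^ ζ)
  simp_rw [gronwallMajorant, mittagLefflerTerm_eq _ ht]
  have := (hsum.hasSum.tendsto_sum_nat.const_mul m).add (hsum.tendsto_atTop_zero.const_mul C)
  rwa [mul_zero, add_zero] at this

theorem le_gronwallMajorant {T : ℝ} {u : ℝ → ℝ} (hζ : 0 < ζ) (hc : 0 ≤ c)
    (hC : ∀ t ∈ Set.Ioc 0 T, u t ≤ C) (hpos : ∀ t ∈ Set.Ioc 0 T, 0 ≤ u t)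
    (hineq : ∀ t ∈ Set.Ioc 0 T, u t ≤ m + c * ∫ τ in 0..t, (t - τ) ^ (ζ - 1) * u τ) (k : ℕ) :
    ∀ t ∈ Set.Ioc 0 T, u t ≤ gronwallMajorant ζ c m C k t := by
  induction k with
  | zero => simpa [gronwallMajorant] using hC
  | succ k ih =>
    intro t ht
    have hsub : Set.Ioc 0 t ⊆ Set.Ioc 0 T := Set.Ioc_subset_Ioc_right ht.2
    have hkernel : ∀ τ ∈ Set.Ioc 0 t, 0 ≤ (t - τ) ^ (ζ - 1) :=
      fun τ hτ => rpow_nonneg (sub_nonneg.2 hτ.2) _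
    calc u t ≤ m + c * ∫ τ in 0..t, (t - τ) ^ (ζ - 1) * u τ := hineq t ht
      _ ≤ m + c * ∫ τ in 0..t, (t - τ) ^ (ζ - 1) * gronwallMajorant ζ c m C k τ := by
        gcongr
        exact intervalIntegral.integral_mono_of_nonneg ht.1.le
          (intervalIntegrable_kernel_mul_gronwallMajorant hζ ht.1 k)
          (fun τ hτ => mul_nonneg (hkernel τ hτ) (hpos τ (hsub hτ)))
          (fun τ hτ => mul_le_mul_of_nonneg_left (ih τ (hsub hτ)) (hkernel τ hτ))
      _ = gronwallMajorant ζ c m C (k + 1) t :=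
        add_mul_integral_kernel_mul_gronwallMajorant hζ ht.1 k

end GronwallMajorant

theorem fractional_gronwall_general (ζ m n T : ℝ)
    (hζ : ζ ∈ Set.Ioo (0 : ℝ) 1)
    (hn : 0 < n) (u : ℝ → ℝ)
    (hbdd : ∃ C : ℝ, ∀ t ∈ Set.Ioc (0 : ℝ) T, |u t| ≤ C)
    (hpos : ∀ t ∈ Set.Ioc (0 : ℝ) T, 0 ≤ u t)
    (hineq : ∀ t ∈ Set.Ioc (0 : ℝ) T,
      u t ≤ m + n * ∫ τ in (0 : ℝ)..t, (t - τ) ^ (ζ - 1) * u τ) :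
    ∀ t ∈ Set.Ioc (0 : ℝ) T,
      u t ≤ m * mittagLeffler ζ (n * Real.Gamma ζ * t ^ ζ) := by
  obtain ⟨C, hC⟩ := hbdd
  intro t ht
  exact ge_of_tendsto' (tendsto_gronwallMajorant hζ.1 ht.1.le) fun k =>
    le_gronwallMajorant hζ.1 hn.le (fun s hs => (le_abs_self _).trans (hC s hs)) hpos hineq k t ht

theorem fractional_gronwall (α ζ m n T : ℝ)
    (hα : α ∈ Set.Ioo (0 : ℝ) 1) (hζ : ζ ∈ Set.Ioo (0 : ℝ) 1)
    (hm : 0 < m) (hn : 0 < n) (hT : 0 < T) (u : ℝ → ℝ)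
    (hbdd : ∃ C : ℝ, ∀ t ∈ Set.Ioc (0 : ℝ) T, |u t| ≤ C)
    (hpos : ∀ t ∈ Set.Ioc (0 : ℝ) T, 0 ≤ u t)
    (hineq : ∀ t ∈ Set.Ioc (0 : ℝ) T,
      u t ≤ m + n * ∫ τ in (0 : ℝ)..t, (t - τ) ^ (ζ - 1) * u τ) :
    ∀ t ∈ Set.Ioc (0 : ℝ) T,
      u t ≤ m * mittagLeffler ζ (n * Real.Gamma ζ * t ^ ζ) :=
  fractional_gronwall_general ζ m n T hζ hn u hbdd hpos hineq
end

section
/- Let 1 ≤ q ≤ p < ∞ and Ξ(z) = e^{z^p} - 1. Then L^q(ℝ^N) ∩ L^∞(ℝ^N) embeds into the Orlicz space L^Ξ(ℝ^N), and for any φ ∈ L^q(ℝ^N) ∩ L^∞(ℝ^N), ‖φ‖_Ξ ≤ (log 2)^{-1/p} (‖φ‖_{L^q} + ‖φ‖_{L^∞}). -/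
open MeasureTheory

/-- Membership in the Orlicz space `L^Ξ(ℝ^N)` with `Ξ(z) = e^{|z|^p} - 1`. -/
def InOrlicz (N : ℕ) (p : ℝ) (φ : EuclideanSpace ℝ (Fin N) → ℝ) : Prop :=
  ∃ κ : ℝ, 0 < κ ∧ Integrable (fun x => Real.exp ((|φ x| / κ) ^ p) - 1) volume

/-- The Luxemburg norm on the Orlicz space with `Ξ(z) = e^{|z|^p} - 1`. -/
noncomputable def luxNorm (N : ℕ) (p : ℝ) (φ : EuclideanSpace ℝ (Fin N) → ℝ) : ℝ :=
  sInf {κ : ℝ | 0 < κ ∧ Integrable (fun x => Real.exp ((|φ x| / κ) ^ p) - 1) volume ∧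
    (∫ x, (Real.exp ((|φ x| / κ) ^ p) - 1)) ≤ 1}

/-!
Put `M = ‖φ‖_q + ‖φ‖_∞` and `κ = (log 2)^{-1/p} M`. Since `u = |φ| / M ≤ 1` a.e. and `q ≤ p`,
`(|φ| / κ)^p = log 2 · u^p ≤ log 2 · u^q`, and convexity of `exp` gives `2^s - 1 ≤ s` on `[0, 1]`.
Hence `e^{(|φ|/κ)^p} - 1 ≤ |φ|^q / M^q`, whose integral is `‖φ‖_q^q / M^q ≤ 1`, so `κ` is admissible
in the Luxemburg infimum. Running this for every `M > ‖φ‖_q + ‖φ‖_∞` also covers `φ = 0`.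
-/

open Real

lemma exp_log_two_mul_sub_one_le {s : ℝ} (h0 : 0 ≤ s) (h1 : s ≤ 1) :
    exp (log 2 * s) - 1 ≤ s := by
  have h := convexOn_exp.2 (Set.mem_univ 0) (Set.mem_univ (log 2)) (sub_nonneg.2 h1) h0
    (sub_add_cancel 1 s)
  simp only [smul_eq_mul, mul_zero, zero_add, exp_zero, mul_one, exp_log two_pos] at h
  rw [mul_comm] at h
  linarith

lemma rpow_div_log_two_rpow_mul {p t M : ℝ} (hp : p ≠ 0) (ht : 0 ≤ t) (hM : 0 < M) :
    (t / (log 2 ^ (-(1 / p)) * M)) ^ p = log 2 * (t / M) ^ p := by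
  have hlog : 0 < log 2 := log_pos one_lt_two
  have hc : (log 2 ^ (-(1 / p))) ^ p = (log 2)⁻¹ := by
    rw [← rpow_mul hlog.le, neg_mul, one_div_mul_cancel hp, rpow_neg_one]
  rw [div_rpow ht (by positivity), mul_rpow (by positivity) hM.le, hc, div_rpow ht hM.le]
  field_simp

lemma exp_rpow_div_sub_one_le {p q t M : ℝ} (hq : 0 < q) (hqp : q ≤ p) (hM : 0 < M)
    (ht : 0 ≤ t) (htM : t ≤ M) :
    exp ((t / (log 2 ^ (-(1 / p)) * M)) ^ p) - 1 ≤ (t / M) ^ q := by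
  have hu0 : 0 ≤ t / M := div_nonneg ht hM.le
  have hu1 : t / M ≤ 1 := (div_le_one hM).2 htM
  rw [rpow_div_log_two_rpow_mul (hq.trans_le hqp).ne' ht hM]
  calc exp (log 2 * (t / M) ^ p) - 1 ≤ exp (log 2 * (t / M) ^ q) - 1 := by
        gcongr ?_ - 1
        exact exp_le_exp.2 <| mul_le_mul_of_nonneg_left
          (rpow_le_rpow_of_exponent_ge' hu0 hu1 hq.le hqp) (log_pos one_lt_two).le
    _ ≤ (t / M) ^ q :=
        exp_log_two_mul_sub_one_le (rpow_nonneg hu0 q) (rpow_le_one hu0 hu1 hq.le)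

namespace MeasureTheory

variable {α : Type*} [MeasurableSpace α] {μ : Measure α} {f : α → ℝ}

lemma MemLp.ae_abs_le_toReal_eLpNorm_top (hf : MemLp f ⊤ μ) :
    ∀ᵐ x ∂μ, |f x| ≤ (eLpNorm f ⊤ μ).toReal := by
  filter_upwards [ae_le_eLpNormEssSup (f := f) (μ := μ)] with x hx
  rw [← Real.norm_eq_abs, ← toReal_enorm (f x), eLpNorm_exponent_top]
  exact ENNReal.toReal_mono (by rw [← eLpNorm_exponent_top]; exact hf.2.ne) hx

lemma MemLp.integrable_abs_rpow {q : ℝ} (hq : 0 < q) (hf : MemLp f (ENNReal.ofReal q) μ) :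
    Integrable (fun x => |f x| ^ q) μ := by
  simpa [ENNReal.toReal_ofReal hq.le] using
    hf.integrable_norm_rpow (ENNReal.ofReal_pos.2 hq).ne' ENNReal.ofReal_ne_top

lemma MemLp.integral_abs_rpow {q : ℝ} (hq : 0 < q) (hf : MemLp f (ENNReal.ofReal q) μ) :
    ∫ x, |f x| ^ q ∂μ = (eLpNorm f (ENNReal.ofReal q) μ).toReal ^ q := by
  rw [hf.eLpNorm_eq_integral_rpow_norm (ENNReal.ofReal_pos.2 hq).ne' ENNReal.ofReal_ne_top,
    ENNReal.toReal_ofReal hq.le, ENNReal.toReal_ofReal (by positivity),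
    rpow_inv_rpow (integral_nonneg fun _ => by positivity) hq.ne']
  simp only [Real.norm_eq_abs]

variable {p q M : ℝ}

lemma ae_abs_exp_rpow_div_sub_one_le (hq : 0 < q) (hqp : q ≤ p) (hM : 0 < M)
    (hfM : ∀ᵐ x ∂μ, |f x| ≤ M) :
    ∀ᵐ x ∂μ, |exp ((|f x| / (log 2 ^ (-(1 / p)) * M)) ^ p) - 1| ≤ |f x| ^ q / M ^ q := by
  filter_upwards [hfM] with x hx
  rw [abs_of_nonneg (sub_nonneg.2 (one_le_exp (by positivity))), ← div_rpow (abs_nonneg _) hM.le]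
  exact exp_rpow_div_sub_one_le hq hqp hM (abs_nonneg _) hx

lemma integrable_exp_rpow_div_sub_one (hq : 0 < q) (hqp : q ≤ p) (hM : 0 < M)
    (hf : AEStronglyMeasurable f μ) (hfM : ∀ᵐ x ∂μ, |f x| ≤ M)
    (hfq : Integrable (fun x => |f x| ^ q) μ) :
    Integrable (fun x => exp ((|f x| / (log 2 ^ (-(1 / p)) * M)) ^ p) - 1) μ := by
  have hmeas : AEMeasurable (fun x => exp ((|f x| / (log 2 ^ (-(1 / p)) * M)) ^ p) - 1) μ := by
    have := hf.aemeasurable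
    fun_prop
  exact (hfq.div_const _).mono' hmeas.aestronglyMeasurable
    (ae_abs_exp_rpow_div_sub_one_le hq hqp hM hfM)

lemma integral_exp_rpow_div_sub_one_le (hq : 0 < q) (hqp : q ≤ p) (hM : 0 < M)
    (hf : AEStronglyMeasurable f μ) (hfM : ∀ᵐ x ∂μ, |f x| ≤ M)
    (hfq : Integrable (fun x => |f x| ^ q) μ) :
    ∫ x, (exp ((|f x| / (log 2 ^ (-(1 / p)) * M)) ^ p) - 1) ∂μ ≤
      (∫ x, |f x| ^ q ∂μ) / M ^ q := by
  rw [← integral_div]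
  refine integral_mono_ae (integrable_exp_rpow_div_sub_one hq hqp hM hf hfM hfq)
    (hfq.div_const _) ?_
  filter_upwards [ae_abs_exp_rpow_div_sub_one_le hq hqp hM hfM] with x hx
  exact (le_abs_self _).trans hx

lemma MemLp.integrable_exp_rpow_div_sub_one_and_integral_le_one (hq : 0 < q) (hqp : q ≤ p)
    (hfq : MemLp f (ENNReal.ofReal q) μ) (hf : MemLp f ⊤ μ) (hM : 0 < M)
    (hfM : (eLpNorm f (ENNReal.ofReal q) μ).toReal + (eLpNorm f ⊤ μ).toReal ≤ M) :
    Integrable (fun x => exp ((|f x| / (log 2 ^ (-(1 / p)) * M)) ^ p) - 1) μ ∧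
      ∫ x, (exp ((|f x| / (log 2 ^ (-(1 / p)) * M)) ^ p) - 1) ∂μ ≤ 1 := by
  have hq_le : (eLpNorm f (ENNReal.ofReal q) μ).toReal ≤ M :=
    le_of_add_le_of_nonneg_left hfM ENNReal.toReal_nonneg
  have htop_le : (eLpNorm f ⊤ μ).toReal ≤ M :=
    le_of_add_le_of_nonneg_right hfM ENNReal.toReal_nonneg
  have hbound : ∀ᵐ x ∂μ, |f x| ≤ M :=
    hf.ae_abs_le_toReal_eLpNorm_top.mono fun x hx => hx.trans htop_le
  have hint := hfq.integrable_abs_rpow hq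
  refine ⟨integrable_exp_rpow_div_sub_one hq hqp hM hf.1 hbound hint, ?_⟩
  calc _ ≤ (∫ x, |f x| ^ q ∂μ) / M ^ q :=
        integral_exp_rpow_div_sub_one_le hq hqp hM hf.1 hbound hint
    _ ≤ 1 := by
        rw [div_le_one (by positivity), hfq.integral_abs_rpow hq]
        exact rpow_le_rpow ENNReal.toReal_nonneg hq_le hq.le

end MeasureTheory

lemma luxNorm_le {N : ℕ} {p κ : ℝ} {φ : EuclideanSpace ℝ (Fin N) → ℝ} (hκ : 0 < κ)
    (hint : Integrable (fun x => exp ((|φ x| / κ) ^ p) - 1) volume)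
    (hle : ∫ x, (exp ((|φ x| / κ) ^ p) - 1) ≤ 1) :
    luxNorm N p φ ≤ κ :=
  csInf_le ⟨0, fun _ h => h.1.le⟩ ⟨hκ, hint, hle⟩

open Filter Topology in
theorem Lq_inter_Linfty_embeds_orlicz (N : ℕ) (p q : ℝ) (hq : 1 ≤ q) (hqp : q ≤ p)
    (φ : EuclideanSpace ℝ (Fin N) → ℝ)
    (hφq : MemLp φ (ENNReal.ofReal q) volume) (hphitop : MemLp φ ⊤ volume) :
    InOrlicz N p φ ∧
      luxNorm N p φ ≤ (Real.log 2) ^ (-(1 / p)) *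
        ((eLpNorm φ (ENNReal.ofReal q) volume).toReal + (eLpNorm φ ⊤ volume).toReal) := by
  set A := (eLpNorm φ (ENNReal.ofReal q) volume).toReal
  set B := (eLpNorm φ ⊤ volume).toReal
  have hAB : 0 ≤ A + B := by positivity
  have hc : 0 < log 2 ^ (-(1 / p)) := rpow_pos_of_pos (log_pos one_lt_two) _
  have admissible (M : ℝ) (hM : A + B < M) :=
    hφq.integrable_exp_rpow_div_sub_one_and_integral_le_one (by linarith) hqp hphitop
      (hAB.trans_lt hM) hM.le
  refine ⟨⟨_, mul_pos hc (by linarith), (admissible (A + B + 1) (by linarith)).1⟩, ?_⟩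
  have hlim : Tendsto (fun M => log 2 ^ (-(1 / p)) * M) (𝓝[>] (A + B))
      (𝓝 (log 2 ^ (-(1 / p)) * (A + B))) :=
    (tendsto_const_nhds.mul tendsto_id).mono_left nhdsWithin_le_nhds
  refine ge_of_tendsto hlim ?_
  filter_upwards [self_mem_nhdsWithin] with M hM
  exact luxNorm_le (mul_pos hc (hAB.trans_lt hM)) (admissible M hM).1 (admissible M hM).2
end
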